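/- For any K ∈ ℝ^{p×n} and B = [B^a; 0], the matrix W + BK has unchanged second block row [W^{pa}, W^{pp}], and hence: if I − (W + BK) is a P-matrix then I − W^{pp} is a P-matrix; if −I + (W + BK) is totally Hurwitz then −I + W^{pp} is totally Hurwitz; if ρ(|W + BK|) < 1 then ρ(|W^{pp}|) < 1; and ‖W + BK‖ ≥ ‖[W^{pa} W^{pp}]‖. -/

import Mathlib

open Matrix
open scoped ENNReal

noncomputable def specRad {n : Type*} [Fintype n] [DecidableEq n] (A : Matrix n n ℝ) : ℝ :=
  sSup {r : ℝ | ∃ μ : ℂ, Module.End.HasEigenvalue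
    (Matrix.toLin' (A.map (fun x => (x : ℂ)))) μ ∧ r = ‖μ‖}

def IsHurwitz {n : Type*} [Fintype n] [DecidableEq n] (A : Matrix n n ℝ) : Prop :=
  ∀ μ : ℂ, Module.End.HasEigenvalue (Matrix.toLin' (A.map (fun x => (x : ℂ)))) μ → μ.re < 0

def TotallyHurwitz {n : Type*} [Fintype n] [DecidableEq n] (A : Matrix n n ℝ) : Prop :=
  ∀ S : Finset n,
    IsHurwitz (A.submatrix (fun i : {x // x ∈ S} => (i : n)) (fun i : {x // x ∈ S} => (i : n)))

def IsPMatrix {n : Type*} [Fintype n] [DecidableEq n] (A : Matrix n n ℝ) : Prop :=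
  ∀ S : Finset n,
    0 < (A.submatrix (fun i : {x // x ∈ S} => (i : n)) (fun i : {x // x ∈ S} => (i : n))).det

noncomputable def opNorm {m n : Type*} [Fintype m] [Fintype n] [DecidableEq n]
    (A : Matrix m n ℝ) : ℝ :=
  ‖LinearMap.toContinuousLinearMap (Matrix.toEuclideanLin A)‖

def TotallyLStable {n : Type*} [Fintype n] [DecidableEq n] (W : Matrix n n ℝ) : Prop :=
  ∃ P : Matrix n n ℝ, P.PosDef ∧ ∀ σ : n → ℝ, (∀ i, σ i = 0 ∨ σ i = 1) →
    (-((-1 + Wᵀ * Matrix.diagonal σ) * P + P * (-1 + Matrix.diagonal σ * W))).PosDef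

/-- componentwise positive part -/
def posv {n : Type*} (y : n → ℝ) : n → ℝ := fun i => max (y i) 0

/-- componentwise clamp to [0, m i], allowing `m i = ∞` -/
noncomputable def clamp {n : Type*} (m : n → ℝ≥0∞) (y : n → ℝ) : n → ℝ :=
  fun i => (min (ENNReal.ofReal (y i)) (m i)).toReal

/-! Since `B` vanishes on the second block row, adding `B K` changes only the first block row of
`W`. Hence `W^{pp}` is a principal submatrix and `[W^{pa} W^{pp}]` a set of rows of `W + B K`, and
each property passes to those.

For the spectral radius of a nonnegative matrix `A` this is a Perron–Frobenius type argument: an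
eigenvector `v` of a principal submatrix for an eigenvalue `|μ| ≥ 1` gives, extended by zero, a
nonzero `u = |v| ≥ 0` with `u ≤ A u`, hence `u ≤ A^k u` for all `k`; but `A^k → 0` by Gelfand's
formula when `ρ(A) < 1`. -/

open Filter Topology Function Module.End

theorem Finset.sum_comp_le_sum_of_injective {ι κ M : Type*} [Fintype ι] [Fintype κ]
    [AddCommMonoid M] [PartialOrder M] [IsOrderedAddMonoid M] {f : ι → κ} (hf : Injective f)
    {g : κ → M} (hg : 0 ≤ g) : ∑ i, g (f i) ≤ ∑ j, g j := by
  simpa using Finset.sum_le_univ_sum_of_nonneg (s := Finset.univ.map ⟨f, hf⟩) fun j => hg j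

namespace Matrix

theorem exists_equiv_submatrix_submatrix_finset_map {m n α : Type*} (A : Matrix n n α)
    (f : m ↪ n) (S : Finset m) :
    ∃ e : S ≃ S.map f, (A.submatrix f f).submatrix ((↑) : S → m) ((↑) : S → m) =
      (A.submatrix ((↑) : S.map f → n) ((↑) : S.map f → n)).submatrix e e := by
  refine ⟨Equiv.ofBijective (fun i => ⟨f i, Finset.mem_map_of_mem f i.2⟩) ⟨?_, ?_⟩, rfl⟩
  · exact fun i j h => Subtype.ext (f.injective (congrArg Subtype.val h))
  · rintro ⟨y, hy⟩
    obtain ⟨x, hx, rfl⟩ := Finset.mem_map.1 hy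
    exact ⟨⟨x, hx⟩, rfl⟩

variable {m n : Type*} [Fintype m] [DecidableEq m] [Fintype n] [DecidableEq n]

theorem hasEigenvalue_toLin'_iff_mem_spectrum {K : Type*} [Field K] (B : Matrix n n K) {μ : K} :
    HasEigenvalue (toLin' B) μ ↔ μ ∈ spectrum K B := by
  rw [hasEigenvalue_iff_mem_spectrum, spectrum_toLin']

theorem spectrum_submatrix_equiv {R : Type*} [CommRing R] (B : Matrix n n R) (e : m ≃ n) :
    spectrum R (B.submatrix e e) = spectrum R B :=
  AlgEquiv.spectrum_eq (reindexAlgEquiv R R e.symm) B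

end Matrix

section PrincipalSubmatrix

variable {m n : Type*} [Fintype m] [DecidableEq m] [Fintype n] [DecidableEq n]

theorem IsPMatrix.submatrix {A : Matrix n n ℝ} (h : IsPMatrix A) (f : m ↪ n) :
    IsPMatrix (A.submatrix f f) := fun S => by
  obtain ⟨e, he⟩ := A.exists_equiv_submatrix_submatrix_finset_map f S
  rw [he, det_submatrix_equiv_self]
  exact h _

theorem IsHurwitz.submatrix_equiv {A : Matrix n n ℝ} (h : IsHurwitz A) (e : m ≃ n) :
    IsHurwitz (A.submatrix e e) := fun μ hμ => h μ <| by
  rwa [hasEigenvalue_toLin'_iff_mem_spectrum, ← submatrix_map, spectrum_submatrix_equiv,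
    ← hasEigenvalue_toLin'_iff_mem_spectrum] at hμ

theorem TotallyHurwitz.submatrix {A : Matrix n n ℝ} (h : TotallyHurwitz A) (f : m ↪ n) :
    TotallyHurwitz (A.submatrix f f) := fun S => by
  obtain ⟨e, he⟩ := A.exists_equiv_submatrix_submatrix_finset_map f S
  rw [he]
  exact (h _).submatrix_equiv e

end PrincipalSubmatrix

theorem tendsto_pow_atTop_nhds_zero_of_spectralRadius_lt_one {A : Type*} [NormedRing A]
    [NormedAlgebra ℂ A] [CompleteSpace A] {a : A} (h : spectralRadius ℂ a < 1) :
    Tendsto (a ^ ·) atTop (𝓝 0) := by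
  obtain ⟨t, hat, ht1⟩ := exists_between h
  have hroot : ∀ᶠ n : ℕ in atTop, (‖a ^ n‖₊ : ℝ≥0∞) < t ^ n := by
    filter_upwards [(spectrum.pow_nnnorm_pow_one_div_tendsto_nhds_spectralRadius a
      ).eventually_lt_const hat, eventually_ge_atTop 1] with n hn hn1
    rwa [one_div, ENNReal.rpow_inv_lt_iff (by exact_mod_cast hn1), ENNReal.rpow_natCast] at hn
  have hnorm : Tendsto (fun n : ℕ => (‖a ^ n‖₊ : ℝ≥0∞)) atTop (𝓝 0) :=
    tendsto_of_tendsto_of_tendsto_of_le_of_le' tendsto_const_nhds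
      (ENNReal.tendsto_pow_atTop_nhds_zero_of_lt_one ht1) (Eventually.of_forall fun _ => zero_le)
      (hroot.mono fun _ hn => hn.le)
  rw [tendsto_zero_iff_norm_tendsto_zero]
  simpa [← ENNReal.coe_zero, ENNReal.tendsto_coe, ← NNReal.tendsto_coe] using hnorm

section SpectralRadius

variable {n : Type*} [Fintype n] [DecidableEq n]

theorem specRad_eq_sSup_norm_image (A : Matrix n n ℝ) :
    specRad A = sSup (norm '' spectrum ℂ (A.map ((↑) : ℝ → ℂ))) := by
  simp only [specRad, hasEigenvalue_toLin'_iff_mem_spectrum]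
  congr 1
  ext r
  simp [eq_comm]

theorem norm_le_specRad (A : Matrix n n ℝ) {μ : ℂ} (hμ : μ ∈ spectrum ℂ (A.map ((↑) : ℝ → ℂ))) :
    ‖μ‖ ≤ specRad A := by
  rw [specRad_eq_sSup_norm_image]
  exact le_csSup ((Matrix.finite_spectrum _).image norm).bddAbove ⟨μ, hμ, rfl⟩

theorem specRad_lt_of_forall_norm_lt (A : Matrix n n ℝ) {c : ℝ} (hc : 0 < c)
    (h : ∀ μ ∈ spectrum ℂ (A.map ((↑) : ℝ → ℂ)), ‖μ‖ < c) : specRad A < c := by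
  rw [specRad_eq_sSup_norm_image]
  rcases (spectrum ℂ (A.map ((↑) : ℝ → ℂ))).eq_empty_or_nonempty with hempty | hne
  · simpa [hempty] using hc
  · obtain ⟨μ, hμ, hμc⟩ := (hne.image norm).csSup_mem ((Matrix.finite_spectrum _).image norm)
    exact hμc ▸ h μ hμ

theorem spectralRadius_map_ofReal_le_specRad (A : Matrix n n ℝ) :
    spectralRadius ℂ (A.map ((↑) : ℝ → ℂ)) ≤ ENNReal.ofReal (specRad A) :=
  iSup₂_le fun μ hμ => by
    rw [← ENNReal.ofReal_coe_nnreal, coe_nnnorm]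
    exact ENNReal.ofReal_le_ofReal (norm_le_specRad A hμ)

theorem Matrix.tendsto_pow_atTop_nhds_zero_of_specRad_lt_one {A : Matrix n n ℝ}
    (h : specRad A < 1) : Tendsto (A ^ ·) atTop (𝓝 0) := by
  have hpow (k : ℕ) : A ^ k = (A.map ((↑) : ℝ → ℂ) ^ k).map Complex.re := by
    rw [show A.map ((↑) : ℝ → ℂ) = A.map Complex.ofRealHom from rfl, ← Matrix.map_pow, map_map]
    exact (map_id' _).symm
  have hre : Continuous fun M : Matrix n n ℂ => M.map Complex.re :=
    continuous_id.matrix_map Complex.continuous_re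
  -- Gelfand's formula needs some Banach algebra norm; any one induces the entrywise topology.
  let _ : NormedRing (Matrix n n ℂ) := Matrix.linftyOpNormedRing
  let _ : NormedAlgebra ℂ (Matrix n n ℂ) := Matrix.linftyOpNormedAlgebra
  have : CompleteSpace (Matrix n n ℂ) := FiniteDimensional.complete ℂ _
  have hC : Tendsto (A.map ((↑) : ℝ → ℂ) ^ ·) atTop (𝓝 0) :=
    tendsto_pow_atTop_nhds_zero_of_spectralRadius_lt_one <|
      (spectralRadius_map_ofReal_le_specRad A).trans_lt (ENNReal.ofReal_lt_one.2 h)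
  convert (hre.tendsto 0).comp hC using 1
  · exact funext hpow
  · simp

end SpectralRadius

section Nonneg

variable {m n : Type*} [Fintype m] [Fintype n] [DecidableEq n]

theorem Matrix.eq_zero_of_le_mulVec_of_tendsto_pow {A : Matrix n n ℝ} (hA : ∀ i j, 0 ≤ A i j)
    {u : n → ℝ} (hu : 0 ≤ u) (hAu : u ≤ A *ᵥ u) (hpow : Tendsto (A ^ ·) atTop (𝓝 0)) :
    u = 0 := by
  have hmono : Monotone (A *ᵥ ·) := fun x y hxy i =>
    Finset.sum_le_sum fun j _ => mul_le_mul_of_nonneg_left (hxy j) (hA i j)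
  have hle (k : ℕ) : u ≤ (A ^ k) *ᵥ u := by
    induction k with
    | zero => simp
    | succ k ih =>
      calc u ≤ A *ᵥ u := hAu
        _ ≤ A *ᵥ ((A ^ k) *ᵥ u) := hmono ih
        _ = (A ^ (k + 1)) *ᵥ u := by rw [mulVec_mulVec, pow_succ']
  have hlim : Tendsto (fun k : ℕ => (A ^ k) *ᵥ u) atTop (𝓝 0) := by
    simpa [Function.comp_def] using
      ((continuous_id.matrix_mulVec continuous_const).tendsto 0).comp hpow
  exact le_antisymm (ge_of_tendsto' hlim hle) hu

theorem Matrix.norm_le_mulVec_norm_of_mulVec_eq_smul {M : Matrix m m ℝ} (hM : ∀ i j, 0 ≤ M i j)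
    {μ : ℂ} (hμ : 1 ≤ ‖μ‖) {v : m → ℂ} (hv : M.map ((↑) : ℝ → ℂ) *ᵥ v = μ • v) :
    (fun i => ‖v i‖) ≤ M *ᵥ fun i => ‖v i‖ := fun i =>
  calc ‖v i‖ ≤ ‖μ‖ * ‖v i‖ := le_mul_of_one_le_left (norm_nonneg _) hμ
    _ = ‖∑ j, (M i j : ℂ) * v j‖ := by rw [← norm_mul, ← smul_eq_mul, ← Pi.smul_apply, ← hv]; rfl
    _ ≤ ∑ j, ‖(M i j : ℂ) * v j‖ := norm_sum_le _ _
    _ = (M *ᵥ fun i => ‖v i‖) i := by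
      simp [mulVec, dotProduct, Complex.norm_real, abs_of_nonneg (hM i _)]

theorem Matrix.extend_le_mulVec_extend {A : Matrix n n ℝ} (hA : ∀ i j, 0 ≤ A i j) {f : m → n}
    (hf : Injective f) {w : m → ℝ} (hw0 : 0 ≤ w) (hw : w ≤ A.submatrix f f *ᵥ w) :
    extend f w 0 ≤ A *ᵥ extend f w 0 := by
  have hext0 : 0 ≤ extend f w 0 := Function.extend_nonneg hw0 le_rfl
  intro j
  by_cases hj : ∃ i, f i = j
  · obtain ⟨i, rfl⟩ := hj
    rw [hf.extend_apply]
    refine (hw i).trans ?_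
    calc (A.submatrix f f *ᵥ w) i = ∑ i', A (f i) (f i') * extend f w 0 (f i') := by
          simp [mulVec, dotProduct, hf.extend_apply]
      _ ≤ ∑ j', A (f i) j' * extend f w 0 j' :=
          Finset.sum_comp_le_sum_of_injective hf
            (g := fun j' => A (f i) j' * extend f w 0 j') fun j' => mul_nonneg (hA _ _) (hext0 j')
  · rw [extend_apply' _ _ _ hj]
    exact Finset.sum_nonneg fun j' _ => mul_nonneg (hA _ _) (hext0 j')

end Nonneg

theorem specRad_submatrix_lt_one {m n : Type*} [Fintype m] [DecidableEq m] [Fintype n]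
    [DecidableEq n] {A : Matrix n n ℝ} (hA : ∀ i j, 0 ≤ A i j) {f : m → n} (hf : Injective f)
    (h : specRad A < 1) : specRad (A.submatrix f f) < 1 := by
  refine specRad_lt_of_forall_norm_lt _ one_pos fun μ hμ => ?_
  by_contra! hμ1
  obtain ⟨v, hv⟩ := ((hasEigenvalue_toLin'_iff_mem_spectrum _).2 hμ).exists_hasEigenvector
  have hMv : (A.submatrix f f).map ((↑) : ℝ → ℂ) *ᵥ v = μ • v := by
    rw [← toLin'_apply]
    exact hv.apply_eq_smul
  have hw := norm_le_mulVec_norm_of_mulVec_eq_smul (fun _ _ => hA _ _) hμ1 hMv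
  have hu := extend_le_mulVec_extend hA hf (fun i => norm_nonneg (v i)) hw
  have hu0 := eq_zero_of_le_mulVec_of_tendsto_pow hA
    (Function.extend_nonneg (fun i => norm_nonneg (v i)) le_rfl) hu
    (tendsto_pow_atTop_nhds_zero_of_specRad_lt_one h)
  obtain ⟨i, hi⟩ := Function.ne_iff.1 hv.2
  have := congrFun hu0 (f i)
  rw [hf.extend_apply] at this
  exact hi (norm_eq_zero.1 this)

theorem opNorm_submatrix_le {l m n : Type*} [Fintype l] [Fintype m] [Fintype n] [DecidableEq n]
    (A : Matrix m n ℝ) {f : l → m} (hf : Injective f) : opNorm (A.submatrix f id) ≤ opNorm A := by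
  refine ContinuousLinearMap.opNorm_le_bound _ (norm_nonneg _) fun x => ?_
  refine le_trans ?_ (ContinuousLinearMap.le_opNorm _ x)
  simp only [LinearMap.coe_toContinuousLinearMap', EuclideanSpace.norm_eq]
  gcongr
  have hrows (i : l) : toEuclideanLin (A.submatrix f id) x i = toEuclideanLin A x (f i) := rfl
  simp only [hrows]
  exact Finset.sum_comp_le_sum_of_injective hf (g := fun j => ‖toEuclideanLin A x j‖ ^ 2)
    fun _ => by positivity

theorem stmt18 {r s p : ℕ} (Waa : Matrix (Fin r) (Fin r) ℝ) (Wap : Matrix (Fin r) (Fin s) ℝ)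
    (Wpa : Matrix (Fin s) (Fin r) ℝ) (Wpp : Matrix (Fin s) (Fin s) ℝ)
    (Ba : Matrix (Fin r) (Fin p) ℝ) (K : Matrix (Fin p) (Fin r ⊕ Fin s) ℝ) :
    let W : Matrix (Fin r ⊕ Fin s) (Fin r ⊕ Fin s) ℝ := Matrix.fromBlocks Waa Wap Wpa Wpp
    let B : Matrix (Fin r ⊕ Fin s) (Fin p) ℝ := Matrix.of (Sum.elim (Ba : Fin r → Fin p → ℝ) (fun _ _ => 0))
    let Wrow : Matrix (Fin s) (Fin r ⊕ Fin s) ℝ := Matrix.of (fun i => Sum.elim (Wpa i) (Wpp i))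
    (∀ i : Fin s, ∀ j : Fin r ⊕ Fin s, (W + B * K) (Sum.inr i) j = Wrow i j) ∧
    (IsPMatrix (1 - (W + B * K)) → IsPMatrix (1 - Wpp)) ∧
    (TotallyHurwitz (-1 + (W + B * K)) → TotallyHurwitz (-1 + Wpp)) ∧
    (specRad ((W + B * K).map (fun a => |a|)) < 1 → specRad (Wpp.map (fun a => |a|)) < 1) ∧
    (opNorm Wrow ≤ opNorm (W + B * K)) := by
  intro W B Wrow
  have hB (i : Fin s) (k : Fin p) : B (Sum.inr i) k = 0 := rfl
  have hrow : (W + B * K).submatrix Sum.inr id = Wrow := by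
    ext i (j | j) <;> simp [W, Wrow, Matrix.mul_apply, hB]
  have hpp : (W + B * K).submatrix Embedding.inr Embedding.inr = Wpp := by
    ext i j
    simpa [Wrow] using congrFun₂ hrow i (Sum.inr j)
  refine ⟨fun i j => congrFun₂ hrow i j, fun h => ?_, fun h => ?_, fun h => ?_, ?_⟩
  · simpa only [submatrix_sub, Pi.sub_apply, submatrix_one_embedding, hpp] using
      h.submatrix Embedding.inr
  · simpa only [← hpp, submatrix_add, submatrix_neg, Pi.add_apply, Pi.neg_apply,
      submatrix_one_embedding] using h.submatrix Embedding.inr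
  · rw [← hpp, ← submatrix_map]
    exact specRad_submatrix_lt_one (fun _ _ => abs_nonneg _) Embedding.inr.injective h
  · exact hrow ▸ opNorm_submatrix_le (W + B * K) Sum.inr_injective
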